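/- In an SSP where every non-goal state has all action costs strictly positive and bounded below by c_min > 0, any policy whose value V^π(s) is finite at state s is proper at s: following π from s reaches a goal with probability 1. -/
import Mathlib


open Filter

/-- Expected cost incurred at step `t` of the Markov chain with kernel `P`
and per-state cost `c`, started at `s`. -/
noncomputable def stepCost {S : Type*} [Fintype S] (P : S → S → ℝ) (c : S → ℝ) :
    ℕ → S → ℝ
  | 0, s => c s
  | t + 1, s => ∑ s', P s s' * stepCost P c t s'

/-- Probability that the chain started at `s` is outside the goal set `G`
at time `t`. -/
noncomputable def notGoalProb {S : Type*} [Fintype S] (P : S → S → ℝ)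
    (G : Set S) [DecidablePred (· ∈ G)] : ℕ → S → ℝ
  | 0, s => if s ∈ G then 0 else 1
  | t + 1, s => ∑ s', P s s' * notGoalProb P G t s'

lemma notGoalProb_nonneg {S : Type*} [Fintype S] (P : S → S → ℝ)
    (G : Set S) [DecidablePred (· ∈ G)] (hP0 : ∀ s s', 0 ≤ P s s') :
    ∀ t s, 0 ≤ notGoalProb P G t s := by
  intro t
  induction t with
  | zero => intro s; simp [notGoalProb]; positivity
  | succ t ih =>
    intro s
    simp only [notGoalProb]
    exact Finset.sum_nonneg fun s' _ => mul_nonneg (hP0 s s') (ih s')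

lemma mul_notGoalProb_le_stepCost {S : Type*} [Fintype S] (P : S → S → ℝ) (c : S → ℝ)
    (G : Set S) [DecidablePred (· ∈ G)] (hP0 : ∀ s s', 0 ≤ P s s')
    (cmin : ℝ) (hcmin : 0 < cmin)
    (hc : ∀ s ∉ G, cmin ≤ c s) (hc0 : ∀ s, 0 ≤ c s) :
    ∀ t s, cmin * notGoalProb P G t s ≤ stepCost P c t s := by
  intro t
  induction t with
  | zero =>
    intro s
    simp only [notGoalProb, stepCost]
    by_cases h : s ∈ G <;> simp [h]
    · exact hc0 s
    · exact hc s h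
  | succ t ih =>
    intro s
    simp only [notGoalProb, stepCost, Finset.mul_sum]
    apply Finset.sum_le_sum
    intro s' _
    rw [mul_left_comm]
    exact mul_le_mul_of_nonneg_left (ih s') (hP0 s s')

/-- In an SSP whose non-goal costs are bounded below by `c_min > 0`, any policy
with finite value at `s` (all partial expected costs bounded by `B`) is proper
at `s`: the induced Markov chain reaches the absorbing goal set with
probability 1, i.e. the probability of being outside `G` at time `t` tends
to 0. -/
theorem finite_value_implies_proper
    {S : Type*} [Fintype S] (P : S → S → ℝ) (c : S → ℝ)
    (G : Set S) [DecidablePred (· ∈ G)]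
    (hP0 : ∀ s s', 0 ≤ P s s') (hP1 : ∀ s, ∑ s', P s s' = 1)
    (habs : ∀ s ∈ G, P s s = 1) (hgoal0 : ∀ s ∈ G, c s = 0)
    (cmin : ℝ) (hcmin : 0 < cmin)
    (hc : ∀ s ∉ G, cmin ≤ c s) (hc0 : ∀ s, 0 ≤ c s)
    (s : S) (B : ℝ)
    (hfin : ∀ t : ℕ, ∑ u ∈ Finset.range t, stepCost P c u s ≤ B) :
    Tendsto (fun t => notGoalProb P G t s) atTop (nhds 0) := by
  have hsc0 : ∀ t s0, 0 ≤ stepCost P c t s0 := by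
    intro t
    induction t with
    | zero => intro s0; exact hc0 s0
    | succ t ih =>
      intro s0
      exact Finset.sum_nonneg fun s' _ => mul_nonneg (hP0 s0 s') (ih s')
  have hsum : Summable (fun t => stepCost P c t s) :=
    summable_of_sum_range_le (fun t => hsc0 t s) hfin
  have hlim : Tendsto (fun t => stepCost P c t s) atTop (nhds 0) :=
    hsum.tendsto_atTop_zero
  have hlim2 : Tendsto (fun t => stepCost P c t s / cmin) atTop (nhds 0) := by
    simpa using hlim.div_const cmin
  apply squeeze_zero (fun t => notGoalProb_nonneg P G hP0 t s) _ hlim2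
  intro t
  rw [le_div_iff₀ hcmin, mul_comm]
  exact mul_notGoalProb_le_stepCost P c G hP0 cmin hcmin hc hc0 t s
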